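/- Let M be a finite set and C a downward closed collection of subsets of M. Let a, b ∈ Δ_C and suppose the whole line segment {(1−t)·a + t·b : t ∈ [0,1]} is contained in Δ_C. Let W = supp(a) ∪ supp(b), where supp(λ) = {α | λ_α > 0}. Then W ∈ C, and for every t with 0 < t < 1 the point (1−t)·a + t·b lies in the interior int Δ_W; moreover W is the unique element of C with this property. (A line segment contained in Δ_C lies entirely within the interior of a unique simplex, except possibly its endpoints, which lie in Δ_W and may lie on faces of Δ_W.) -/

import Mathlib

/-- The realisation simplex `Δ_X ⊆ ℝ^M` spanned by a subset `X ⊆ M`. -/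
def simplexOn {M : Type*} [Fintype M] (X : Set M) : Set (M → ℝ) :=
  {l | (∀ α, 0 ≤ l α) ∧ (∑ α, l α = 1) ∧ ∀ α ∉ X, l α = 0}

/-- The interior of the simplex `Δ_X`. -/
def simplexInterior {M : Type*} [Fintype M] (X : Set M) : Set (M → ℝ) :=
  {l | l ∈ simplexOn X ∧ ∀ α ∈ X, 0 < l α}

/-- The realisation `Δ_C` of a collection `C` of subsets of `M`. -/
def realisation {M : Type*} [Fintype M] (C : Set (Set M)) : Set (M → ℝ) :=
  ⋃ X ∈ C, simplexOn X

/-- The support of a weight function. -/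
def supportOf {M : Type*} (l : M → ℝ) : Set M := {α | 0 < l α}

/-!
Every point `l` of a simplex lies in the interior of the face spanned by its own support, and that
support is the only `X` with `l ∈ int Δ_X`; for `0 < t < 1` the support of `(1 - t) a + t b` is
`supp a ∪ supp b`. Downward closure of `C` puts this support in `C`.
-/

section Simplex

variable {M : Type*} [Fintype M] {X Y : Set M} {l : M → ℝ}

theorem mem_realisation_iff {C : Set (Set M)} :
    l ∈ realisation C ↔ ∃ X ∈ C, l ∈ simplexOn X := by
  simp [realisation]

theorem simplexOn_mono (h : X ⊆ Y) : simplexOn X ⊆ simplexOn Y :=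
  fun _ ⟨hnonneg, hsum, hzero⟩ => ⟨hnonneg, hsum, fun α hα => hzero α (fun hX => hα (h hX))⟩

theorem supportOf_subset_of_mem_simplexOn (hl : l ∈ simplexOn X) : supportOf l ⊆ X :=
  fun α hα => by_contra fun hX => (hα : 0 < l α).ne' (hl.2.2 α hX)

theorem mem_simplexInterior_supportOf (hl : l ∈ simplexOn X) :
    l ∈ simplexInterior (supportOf l) :=
  ⟨⟨hl.1, hl.2.1, fun α hα => le_antisymm (not_lt.mp hα) (hl.1 α)⟩, fun _ hα => hα⟩

theorem mem_simplexOn_supportOf (hl : l ∈ simplexOn X) : l ∈ simplexOn (supportOf l) :=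
  (mem_simplexInterior_supportOf hl).1

theorem eq_supportOf_of_mem_simplexInterior (hl : l ∈ simplexInterior X) : X = supportOf l :=
  (supportOf_subset_of_mem_simplexOn hl.1).antisymm' hl.2

theorem supportOf_mem_of_mem_realisation {C : Set (Set M)} (hC : ∀ X ∈ C, ∀ Y ⊆ X, Y ∈ C)
    (hl : l ∈ realisation C) : supportOf l ∈ C := by
  obtain ⟨X, hX, hlX⟩ := mem_realisation_iff.mp hl
  exact hC X hX _ (supportOf_subset_of_mem_simplexOn hlX)

end Simplex

theorem supportOf_convexCombination {M : Type*} {a b : M → ℝ} (ha : ∀ α, 0 ≤ a α)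
    (hb : ∀ α, 0 ≤ b α) {t : ℝ} (ht₀ : 0 < t) (ht₁ : t < 1) :
    supportOf (fun α => (1 - t) * a α + t * b α) = supportOf a ∪ supportOf b := by
  ext α
  have ha' := ha α
  have hb' := hb α
  change 0 < (1 - t) * a α + t * b α ↔ 0 < a α ∨ 0 < b α
  constructor
  · intro h
    by_contra! hab
    nlinarith [hab.1, hab.2]
  · rintro (h | h) <;> nlinarith

/-- A line segment contained in the realisation `Δ_C` lies, except possibly at
its endpoints, entirely within the interior of a unique simplex, namely the
one spanned by `W = supp a ∪ supp b`; its endpoints lie in `Δ_W`. -/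
theorem segment_in_unique_interior {M : Type*} [Fintype M]
    (C : Set (Set M)) (hC : ∀ X ∈ C, ∀ Y ⊆ X, Y ∈ C)
    (a b : M → ℝ) (ha : a ∈ realisation C) (hb : b ∈ realisation C)
    (hseg : ∀ t ∈ Set.Icc (0 : ℝ) 1,
      (fun α => (1 - t) * a α + t * b α) ∈ realisation C) :
    supportOf a ∪ supportOf b ∈ C ∧
    a ∈ simplexOn (supportOf a ∪ supportOf b) ∧
    b ∈ simplexOn (supportOf a ∪ supportOf b) ∧
    (∀ t : ℝ, 0 < t → t < 1 →
      (fun α => (1 - t) * a α + t * b α) ∈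
        simplexInterior (supportOf a ∪ supportOf b)) ∧
    ∀ X ∈ C, (∀ t : ℝ, 0 < t → t < 1 →
        (fun α => (1 - t) * a α + t * b α) ∈ simplexInterior X) →
      X = supportOf a ∪ supportOf b := by
  obtain ⟨_, -, haX⟩ := mem_realisation_iff.mp ha
  obtain ⟨_, -, hbX⟩ := mem_realisation_iff.mp hb
  have hsupp (t : ℝ) (ht₀ : 0 < t) (ht₁ : t < 1) :=
    supportOf_convexCombination haX.1 hbX.1 ht₀ ht₁
  have hinterior (t : ℝ) (ht₀ : 0 < t) (ht₁ : t < 1) :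
      (fun α => (1 - t) * a α + t * b α) ∈ simplexInterior (supportOf a ∪ supportOf b) := by
    obtain ⟨_, -, hX⟩ := mem_realisation_iff.mp (hseg t ⟨ht₀.le, ht₁.le⟩)
    simpa only [hsupp t ht₀ ht₁] using mem_simplexInterior_supportOf hX
  refine ⟨?_, simplexOn_mono Set.subset_union_left (mem_simplexOn_supportOf haX),
    simplexOn_mono Set.subset_union_right (mem_simplexOn_supportOf hbX), hinterior,
    fun X _ hX => ?_⟩
  · rw [← hsupp (1 / 2) (by norm_num) (by norm_num)]
    exact supportOf_mem_of_mem_realisation hC (hseg _ ⟨by norm_num, by norm_num⟩)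
  · rw [eq_supportOf_of_mem_simplexInterior (hX _ one_half_pos one_half_lt_one),
      eq_supportOf_of_mem_simplexInterior (hinterior _ one_half_pos one_half_lt_one)]
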